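/- arXiv:1611.04087 — 4 statements merged into one kernel-verified Lean document; each statement's English description precedes it below -/
import Mathlib

section
/- Let K be a nonempty bounded convex set in a strictly convex Banach space X and T : K → K an isometry. Then the fixed point set Fix(T) = {x ∈ K : Tx = x} is convex. -/
theorem fixedPoints_isometry_convex_of_strictConvex
    {X : Type*} [NormedAddCommGroup X] [NormedSpace ℝ X] [CompleteSpace X]
    [StrictConvexSpace ℝ X]
    (K : Set X) (hK : K.Nonempty) (hb : Bornology.IsBounded K) (hconv : Convex ℝ K)
    (T : X → X) (hmaps : Set.MapsTo T K K)
    (hiso : ∀ x ∈ K, ∀ y ∈ K, ‖T x - T y‖ = ‖x - y‖) :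
    Convex ℝ {x ∈ K | T x = x} := by
  rintro x ⟨hxK, hx⟩ y ⟨hyK, hy⟩ a b ha hb' hab
  set z := a • x + b • y with hz
  have hzK : z ∈ K := hconv hxK hyK ha hb' hab
  have hTzK : T z ∈ K := hmaps hzK
  have hab' : a = 1 - b := by linarith
  have hzl : z = AffineMap.lineMap x y b := by
    rw [hz, AffineMap.lineMap_apply_module, hab']
  have hdxz : dist x z = b * dist x y := by
    rw [hzl, dist_left_lineMap, Real.norm_of_nonneg hb']
  have hdzy : dist z y = a * dist x y := by
    rw [hzl, dist_lineMap_right, Real.norm_of_nonneg (by linarith : (0:ℝ) ≤ 1 - b), ← hab']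
  have h1 : dist x (T z) = b * dist x y := by
    have h := hiso x hxK z hzK
    rw [hx] at h
    rw [dist_eq_norm, h, ← dist_eq_norm, hdxz]
  have h2 : dist (T z) y = a * dist x y := by
    have h := hiso z hzK y hyK
    rw [hy] at h
    rw [dist_eq_norm, h, ← dist_eq_norm, hdzy]
  have := eq_lineMap_of_dist_eq_mul_of_dist_eq_mul
    (x := x) (y := T z) (z := y) (r := b) h1 (by rw [h2, ← hab'])
  refine ⟨hzK, ?_⟩
  rw [this, ← hzl]
end

section
/- Every nonempty compact convex set K with diameter δ(K) > 0 in a Banach space has normal structure: there exists x ∈ K such that sup{‖x − y‖ : y ∈ K} < δ(K), where δ(K) = sup{‖z − y‖ : z, y ∈ K}. -/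
noncomputable def rad {X : Type*} [MetricSpace X] (K : Set X) (x : X) : ℝ :=
  sSup ((dist x) '' K)

theorem compact_convex_normal_structure
    {X : Type*} [NormedAddCommGroup X] [NormedSpace ℝ X] [CompleteSpace X]
    (K : Set X) (hK : K.Nonempty) (hc : IsCompact K) (hconv : Convex ℝ K)
    (hd : 0 < Metric.diam K) :
    ∃ x ∈ K, rad K x < Metric.diam K := by
  by_contra hcon
  push_neg at hcon
  set δ := Metric.diam K with hδ
  -- radius is always ≤ diameter for points of K, even for any point the sup attained
  have hdle : ∀ x ∈ K, ∀ z ∈ K, dist x z ≤ δ := fun x hx z hz =>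
    Metric.dist_le_diam_of_mem hc.isBounded hx hz
  -- maximum of dist c · attained on K
  have attain : ∀ c : X, ∃ y ∈ K, ∀ z ∈ K, dist c z ≤ dist c y := by
    intro c
    obtain ⟨y, hy, hmax⟩ := hc.exists_isMaxOn hK
      (Continuous.continuousOn (continuous_const.dist continuous_id))
    exact ⟨y, hy, fun z hz => hmax hz⟩
  classical
  set pick : X → X := fun c => (attain c).choose with hpickdef
  have hpickK : ∀ c, pick c ∈ K := fun c => (attain c).choose_spec.1
  have hpickmax : ∀ c, ∀ z ∈ K, dist c z ≤ dist c (pick c) :=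
    fun c => (attain c).choose_spec.2
  -- for c ∈ K, dist c (pick c) = δ
  have hpickeq : ∀ c ∈ K, dist c (pick c) = δ := by
    intro c hcK
    have hrad : rad K c = δ := le_antisymm
      (Real.sSup_le (by rintro _ ⟨z, hz, rfl⟩; exact hdle c hcK z hz) hd.le)
      (hcon c hcK)
    have hgreat : IsGreatest ((dist c) '' K) (dist c (pick c)) :=
      ⟨⟨pick c, hpickK c, rfl⟩, by rintro _ ⟨z, hz, rfl⟩; exact hpickmax c z hz⟩
    rw [← hrad]
    exact hgreat.csSup_eq.symm
  -- recursively define the sequence and running sums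
  set aux : ℕ → X × X := fun n => Nat.rec (hK.choose, hK.choose)
    (fun n p => ((pick ((((n : ℝ) + 1))⁻¹ • p.2)),
      p.2 + pick ((((n : ℝ) + 1))⁻¹ • p.2))) n with hauxdef
  set x : ℕ → X := fun n => (aux n).1 with hxdef
  have haux0 : aux 0 = (hK.choose, hK.choose) := rfl
  have hauxsucc : ∀ n, aux (n + 1) =
      ((pick ((((n : ℝ) + 1))⁻¹ • (aux n).2)),
        (aux n).2 + pick ((((n : ℝ) + 1))⁻¹ • (aux n).2)) := fun n => rfl
  have hS : ∀ n, (aux n).2 = ∑ i ∈ Finset.range (n + 1), x i := by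
    intro n
    induction n with
    | zero => simp [haux0, hxdef]
    | succ n ih =>
      rw [Finset.sum_range_succ, ← ih, hauxsucc n]
  have hxK : ∀ n, x n ∈ K := by
    intro n
    cases n with
    | zero => exact hK.choose_spec
    | succ n => exact hpickK _
  -- centroid lies in K
  have hcent : ∀ n : ℕ, (((n : ℝ) + 1))⁻¹ • (aux n).2 ∈ K := by
    intro n
    rw [hS n, Finset.smul_sum]
    apply hconv.sum_mem
    · intro i _; positivity
    · rw [Finset.sum_const, Finset.card_range, nsmul_eq_mul]
      push_cast
      field_simp
    · intro i _; exact hxK i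
  -- key: all distances from earlier points to x (n+1) equal δ
  have hkey : ∀ n : ℕ, ∀ i ∈ Finset.range (n + 1), dist (x i) (x (n + 1)) = δ := by
    intro n
    set c : X := (((n : ℝ) + 1))⁻¹ • (aux n).2 with hcdef
    have hx1 : x (n + 1) = pick c := rfl
    have hdc : dist c (x (n + 1)) = δ := by rw [hx1]; exact hpickeq c (hcent n)
    -- c - x (n+1) = (n+1)⁻¹ • ∑ (x i - x (n+1))
    have hid : c - x (n + 1) =
        (((n : ℝ) + 1))⁻¹ • ∑ i ∈ Finset.range (n + 1), (x i - x (n + 1)) := by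
      rw [Finset.sum_sub_distrib, smul_sub, hcdef, hS n, Finset.sum_const,
        Finset.card_range]
      congr 1
      have hne : ((n : ℝ) + 1) ≠ 0 := by positivity
      rw [← Nat.cast_smul_eq_nsmul ℝ, smul_smul]
      push_cast
      rw [inv_mul_cancel₀ hne, one_smul]
    have hsum_ge : ((n : ℝ) + 1) * δ ≤ ∑ i ∈ Finset.range (n + 1), dist (x i) (x (n + 1)) := by
      have hnorm : δ ≤ (((n : ℝ) + 1))⁻¹ * ∑ i ∈ Finset.range (n + 1), dist (x i) (x (n + 1)) := by
        calc δ = dist c (x (n + 1)) := hdc.symm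
        _ = ‖c - x (n + 1)‖ := by rw [dist_eq_norm]
        _ = (((n : ℝ) + 1))⁻¹ * ‖∑ i ∈ Finset.range (n + 1), (x i - x (n + 1))‖ := by
            rw [hid, norm_smul, Real.norm_eq_abs, abs_of_pos (by positivity)]
        _ ≤ (((n : ℝ) + 1))⁻¹ * ∑ i ∈ Finset.range (n + 1), ‖x i - x (n + 1)‖ := by
            gcongr; exact norm_sum_le _ _
        _ = (((n : ℝ) + 1))⁻¹ * ∑ i ∈ Finset.range (n + 1), dist (x i) (x (n + 1)) := by
            simp [dist_eq_norm]
      have hpos : (0 : ℝ) < (n : ℝ) + 1 := by positivity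
      calc ((n : ℝ) + 1) * δ ≤ ((n : ℝ) + 1) * ((((n : ℝ) + 1))⁻¹ *
            ∑ i ∈ Finset.range (n + 1), dist (x i) (x (n + 1))) := by gcongr
      _ = ∑ i ∈ Finset.range (n + 1), dist (x i) (x (n + 1)) := by
          rw [← mul_assoc, mul_inv_cancel₀ hpos.ne', one_mul]
    intro i hi
    by_contra hne
    have hlt : dist (x i) (x (n + 1)) < δ :=
      lt_of_le_of_ne (hdle _ (hxK i) _ (hxK (n + 1))) hne
    have : ∑ j ∈ Finset.range (n + 1), dist (x j) (x (n + 1)) < ((n : ℝ) + 1) * δ := by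
      calc ∑ j ∈ Finset.range (n + 1), dist (x j) (x (n + 1))
          < ∑ _j ∈ Finset.range (n + 1), δ :=
            Finset.sum_lt_sum (fun j _ => hdle _ (hxK j) _ (hxK (n + 1))) ⟨i, hi, hlt⟩
      _ = ((n : ℝ) + 1) * δ := by
          rw [Finset.sum_const, Finset.card_range, nsmul_eq_mul]; push_cast; ring
    linarith [hsum_ge]
  -- pairwise distances δ for i < j
  have hpair : ∀ i j : ℕ, i < j → dist (x i) (x j) = δ := by
    intro i j hij
    obtain ⟨m, rfl⟩ := Nat.exists_eq_add_of_lt hij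
    exact hkey (i + m) i (Finset.mem_range.mpr (by omega))
  -- extract convergent subsequence: contradiction
  obtain ⟨a, _, φ, hφ, hlim⟩ := hc.tendsto_subseq hxK
  have h1 : Filter.Tendsto (fun n => x (φ (n + 1))) Filter.atTop (nhds a) :=
    hlim.comp (Filter.tendsto_add_atTop_nat 1)
  have h2 : Filter.Tendsto (fun n => dist (x (φ n)) (x (φ (n + 1)))) Filter.atTop
      (nhds (dist a a)) := (hlim.dist h1)
  have h3 : (fun n => dist (x (φ n)) (x (φ (n + 1)))) = fun _ => δ := by
    funext n
    exact hpair _ _ (hφ (Nat.lt_succ_self n))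
  rw [h3, dist_self] at h2
  have := tendsto_nhds_unique h2 tendsto_const_nhds
  linarith
end

section
/- Let K be a nonempty weakly compact convex subset of a Banach space X with normal structure, and let T : K → K be an isometry. Then T has a fixed point lying in the Chebyshev center C(K) of K. -/
noncomputable def chebRad {X : Type*} [MetricSpace X] (K : Set X) : ℝ :=
  sInf ((rad K) '' K)

def chebCenter {X : Type*} [MetricSpace X] (K : Set X) : Set X :=
  {x ∈ K | rad K x = chebRad K}

open NormedSpace Set

section Aux

variable {X : Type*} [NormedAddCommGroup X] [NormedSpace ℝ X]

lemma aux_le_of_eps {a b : ℝ} (h : ∀ ε : ℝ, 0 < ε → a ≤ b + ε) : a ≤ b := by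
  by_contra hc
  push_neg at hc
  have := h ((a - b) / 2) (by linarith)
  linarith

lemma aux_pairing_inj : Function.Injective ((topDualPairing ℝ X).flip) := by
  intro x y h
  refine (NormedSpace.eq_iff_forall_dual_eq ℝ).mpr fun g => ?_
  exact LinearMap.congr_fun h g

lemma aux_t2 : T2Space (WeakSpace ℝ X) :=
  (WeakBilin.isEmbedding (aux_pairing_inj)).t2Space

lemma aux_bounded [CompleteSpace X] (K : Set X) (hwc : IsCompact (toWeakSpace ℝ X '' K)) :
    ∃ R : ℝ, 0 ≤ R ∧ ∀ x ∈ K, ‖x‖ ≤ R := by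
  have hpt : ∀ f : StrongDual ℝ X, ∃ C, ∀ x : K, ‖inclusionInDoubleDual ℝ X (x : X) f‖ ≤ C := by
    intro f
    have hc : Continuous fun z : WeakSpace ℝ X => (topDualPairing ℝ X).flip z f :=
      WeakBilin.eval_continuous _ f
    have hcpt : IsCompact ((fun z : WeakSpace ℝ X => (topDualPairing ℝ X).flip z f) ''
        (toWeakSpace ℝ X '' K)) := hwc.image hc
    obtain ⟨C, hC⟩ := hcpt.isBounded.exists_norm_le
    refine ⟨C, fun x => ?_⟩
    have hm : (topDualPairing ℝ X).flip (toWeakSpace ℝ X (x : X)) f ∈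
        ((fun z : WeakSpace ℝ X => (topDualPairing ℝ X).flip z f) '' (toWeakSpace ℝ X '' K)) :=
      ⟨toWeakSpace ℝ X (x : X), ⟨x, x.2, rfl⟩, rfl⟩
    exact hC _ hm
  obtain ⟨C, hC⟩ := banach_steinhaus (g := fun x : K => inclusionInDoubleDual ℝ X (x : X)) hpt
  refine ⟨max C 0, le_max_right _ _, fun x hx => ?_⟩
  have hnm := (inclusionInDoubleDualLi ℝ (E := X)).norm_map x
  calc ‖x‖ = ‖inclusionInDoubleDual ℝ X x‖ := by rw [← hnm]; rfl
    _ ≤ max C 0 := le_trans (hC ⟨x, hx⟩) (le_max_left _ _)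

lemma aux_weak_closed (S : Set X) (hS : Convex ℝ S) (hSc : IsClosed S) :
    IsClosed (toWeakSpace ℝ X '' S) := by
  have h := hS.toWeakSpace_closure ℝ
  rw [hSc.closure_eq] at h
  rw [h]
  exact isClosed_closure

lemma aux_weak_compact {K : Set X} (hwc : IsCompact (toWeakSpace ℝ X '' K))
    {S : Set X} (hSK : S ⊆ K) (hS : Convex ℝ S) (hSc : IsClosed S) :
    IsCompact (toWeakSpace ℝ X '' S) :=
  hwc.of_isClosed_subset (aux_weak_closed S hS hSc) (Set.image_mono hSK)

lemma aux_K_closed {K : Set X} (hwc : IsCompact (toWeakSpace ℝ X '' K)) : IsClosed K := by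
  have : T2Space (WeakSpace ℝ X) := aux_t2
  have h1 : IsClosed (toWeakSpace ℝ X '' K) := hwc.isClosed
  have h2 : K = toWeakSpaceCLM ℝ X ⁻¹' (toWeakSpace ℝ X '' K) := by
    ext x
    simp only [Set.mem_preimage, toWeakSpaceCLM_eq_toWeakSpace]
    exact ⟨fun hx => ⟨x, hx, rfl⟩, fun ⟨y, hy, hxy⟩ => by
      rwa [← (toWeakSpace ℝ X).injective hxy]⟩
  rw [h2]
  exact h1.preimage (map_continuous (toWeakSpaceCLM ℝ X))

/-- members of a weak image are images -/
lemma aux_mem_image {S : Set X} {z : WeakSpace ℝ X} (hz : z ∈ toWeakSpace ℝ X '' S) :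
    (toWeakSpace ℝ X).symm z ∈ S := by
  obtain ⟨y, hy, rfl⟩ := hz
  simpa using hy

end Aux

theorem isometry_fixedPoint_in_chebCenter
    {X : Type*} [NormedAddCommGroup X] [NormedSpace ℝ X] [CompleteSpace X]
    (K : Set X) (hK : K.Nonempty) (hconv : Convex ℝ K)
    (hwc : IsCompact (toWeakSpace ℝ X '' K))
    (hns : ∀ C ⊆ K, C.Nonempty → Convex ℝ C → 0 < Metric.diam C →
      ∃ x ∈ C, rad C x < Metric.diam C)
    (T : X → X) (hmaps : Set.MapsTo T K K)
    (hiso : ∀ x ∈ K, ∀ y ∈ K, ‖T x - T y‖ = ‖x - y‖) :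
    ∃ x₀ ∈ chebCenter K, T x₀ = x₀ := by
  classical
  obtain ⟨R, hR0, hRK⟩ := aux_bounded K hwc
  have hKcl : IsClosed K := aux_K_closed hwc
  have hbdd : ∀ (x : X) (S : Set X), S ⊆ K → BddAbove ((dist x) '' S) := by
    intro x S hS
    refine ⟨‖x‖ + R, ?_⟩
    rintro b ⟨y, hy, rfl⟩
    calc dist x y ≤ ‖x‖ + ‖y‖ := by rw [dist_eq_norm]; exact norm_sub_le _ _
      _ ≤ ‖x‖ + R := by linarith [hRK y (hS hy)]
  have hisod : ∀ x ∈ K, ∀ y ∈ K, dist (T x) (T y) = dist x y := by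
    intro x hx y hy
    simp only [dist_eq_norm]
    exact hiso x hx y hy
  have hmapsn : ∀ n, Set.MapsTo (T^[n]) K K := fun n => hmaps.iterate n
  have hiterd : ∀ n, ∀ x ∈ K, ∀ y ∈ K, dist (T^[n] x) (T^[n] y) = dist x y := by
    intro n
    induction n with
    | zero => simp
    | succ n ih =>
      intro x hx y hy
      rw [Function.iterate_succ_apply', Function.iterate_succ_apply',
        hisod _ (hmapsn n hx) _ (hmapsn n hy)]
      exact ih x hx y hy
  -- the auxiliary functional
  set a : ℕ → X → ℝ := fun n x => rad (T^[n] '' K) x with ha_def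
  have ha_eq : ∀ n x, a n x = sSup ((dist x) '' (T^[n] '' K)) := fun n x => rfl
  have hSK : ∀ n, T^[n] '' K ⊆ K := fun n => (hmapsn n).image_subset
  have hSne : ∀ n, (T^[n] '' K).Nonempty := fun n => hK.image _
  have hSmono : ∀ n, T^[n+1] '' K ⊆ T^[n] '' K := by
    intro n
    calc T^[n+1] '' K = T^[n] '' (T '' K) := by rw [Function.iterate_succ, Set.image_comp]
      _ ⊆ T^[n] '' K := Set.image_mono hmaps.image_subset
  have ha_le : ∀ n (x : X) (c : ℝ), (∀ y ∈ K, dist x (T^[n] y) ≤ c) → a n x ≤ c := by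
    intro n x c h
    rw [ha_eq]
    refine csSup_le ((hSne n).image _) ?_
    rintro b ⟨z, ⟨y, hy, rfl⟩, rfl⟩
    exact h y hy
  have ha_ge : ∀ n (x : X), ∀ y ∈ T^[n] '' K, dist x y ≤ a n x := by
    intro n x y hy
    rw [ha_eq]
    exact le_csSup (hbdd x _ (hSK n)) ⟨y, hy, rfl⟩
  have ha_anti : ∀ (x : X), Antitone (fun n => a n x) := by
    intro x
    refine antitone_nat_of_succ_le fun n => ?_
    refine ha_le (n+1) x _ fun y hy => ?_
    exact ha_ge n x _ (hSmono n ⟨y, hy, rfl⟩)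
  have ha_nonneg : ∀ n x, 0 ≤ a n x := by
    intro n x
    obtain ⟨y, hy⟩ := hSne n
    exact le_trans dist_nonneg (ha_ge n x y hy)
  set g : X → ℝ := fun x => ⨅ n, a n x with hg_def
  have hg_bddB : ∀ x : X, BddBelow (Set.range fun n => a n x) := by
    intro x
    exact ⟨0, by rintro b ⟨n, rfl⟩; exact ha_nonneg n x⟩
  have hg_le : ∀ (x : X) n, g x ≤ a n x := fun x n => ciInf_le (hg_bddB x) n
  have hg_ge : ∀ (x : X) (c : ℝ), (∀ n, c ≤ a n x) → c ≤ g x := fun x c h => le_ciInf h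
  have hg_nonneg : ∀ x, 0 ≤ g x := fun x => hg_ge x 0 fun n => ha_nonneg n x
  have ha_exists : ∀ (x : X) (ε : ℝ), 0 < ε → ∃ n, a n x ≤ g x + ε := by
    intro x ε hε
    have : iInf (fun n => a n x) < g x + ε := by
      have : g x < g x + ε := lt_add_of_pos_right _ hε
      exact this
    obtain ⟨n, hn⟩ := exists_lt_of_ciInf_lt this
    exact ⟨n, hn.le⟩
  have hg_shift : ∀ x ∈ K, g (T x) ≤ g x := by
    intro x hx
    refine hg_ge _ _ fun n => ?_
    refine le_trans (hg_le (T x) (n+1)) (ha_le (n+1) (T x) _ fun y hy => ?_)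
    rw [Function.iterate_succ_apply', hisod x hx _ (hmapsn n hy)]
    exact ha_ge n x _ ⟨y, hy, rfl⟩
  have ha_lip : ∀ n (x y : X), a n x ≤ a n y + dist x y := by
    intro n x y
    refine ha_le n x _ fun z hz => ?_
    have h1 : dist y (T^[n] z) ≤ a n y := ha_ge n y _ ⟨z, hz, rfl⟩
    calc dist x (T^[n] z) ≤ dist x y + dist y (T^[n] z) := dist_triangle _ _ _
      _ ≤ a n y + dist x y := by linarith
  have hg_cont : Continuous g := by
    have : LipschitzWith 1 g := by
      refine LipschitzWith.of_dist_le_mul fun x y => ?_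
      rw [NNReal.coe_one, one_mul, Real.dist_eq, abs_sub_le_iff]
      constructor
      · have h : ∀ n, g x - dist x y ≤ a n y := fun n =>
          by linarith [hg_le x n, ha_lip n x y]
        linarith [hg_ge y _ h]
      · have h : ∀ n, g y - dist x y ≤ a n x := fun n =>
          by have := ha_lip n y x; rw [dist_comm y x] at this; linarith [hg_le y n]
        linarith [hg_ge x _ h]
    exact this.continuous
  have ha_convex : ∀ n (x y : X) (α β : ℝ), 0 ≤ α → 0 ≤ β → α + β = 1 →
      a n (α • x + β • y) ≤ α * a n x + β * a n y := by
    intro n x y α β hα hβ hαβ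
    refine ha_le n _ _ fun z hz => ?_
    have key : α • x + β • y - T^[n] z = α • (x - T^[n] z) + β • (y - T^[n] z) := by
      match_scalars <;> linarith
    have h1 : ‖x - T^[n] z‖ ≤ a n x := by
      rw [← dist_eq_norm]; exact ha_ge n x _ ⟨z, hz, rfl⟩
    have h2 : ‖y - T^[n] z‖ ≤ a n y := by
      rw [← dist_eq_norm]; exact ha_ge n y _ ⟨z, hz, rfl⟩
    calc dist (α • x + β • y) (T^[n] z) = ‖α • (x - T^[n] z) + β • (y - T^[n] z)‖ := by
          rw [dist_eq_norm, key]
      _ ≤ α * ‖x - T^[n] z‖ + β * ‖y - T^[n] z‖ := by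
          refine le_trans (norm_add_le _ _) ?_
          rw [norm_smul, norm_smul, Real.norm_eq_abs, Real.norm_eq_abs,
            abs_of_nonneg hα, abs_of_nonneg hβ]
      _ ≤ α * a n x + β * a n y := by
          have := mul_le_mul_of_nonneg_left h1 hα
          have := mul_le_mul_of_nonneg_left h2 hβ
          linarith
  have hsub_convex : ∀ c : ℝ, Convex ℝ {x | x ∈ K ∧ g x ≤ c} := by
    intro c x hx y hy α β hα hβ hαβ
    refine ⟨hconv hx.1 hy.1 hα hβ hαβ, ?_⟩
    refine aux_le_of_eps fun ε hε => ?_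
    obtain ⟨n₁, h₁⟩ := ha_exists x ε hε
    obtain ⟨n₂, h₂⟩ := ha_exists y ε hε
    have e1 : a (max n₁ n₂) x ≤ c + ε := le_trans (ha_anti x (le_max_left _ _)) (by linarith [hx.2])
    have e2 : a (max n₁ n₂) y ≤ c + ε := le_trans (ha_anti y (le_max_right _ _)) (by linarith [hy.2])
    calc g (α • x + β • y) ≤ a (max n₁ n₂) (α • x + β • y) := hg_le _ _
      _ ≤ α * a (max n₁ n₂) x + β * a (max n₁ n₂) y := ha_convex _ x y α β hα hβ hαβ
      _ ≤ α * (c + ε) + β * (c + ε) := by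
          have := mul_le_mul_of_nonneg_left e1 hα
          have := mul_le_mul_of_nonneg_left e2 hβ
          linarith
      _ = c + ε := by rw [← add_mul, hαβ, one_mul]
  have hsub_closed : ∀ c : ℝ, IsClosed {x | x ∈ K ∧ g x ≤ c} := by
    intro c
    have : {x | x ∈ K ∧ g x ≤ c} = K ∩ g ⁻¹' (Set.Iic c) := rfl
    rw [this]
    exact hKcl.inter (isClosed_Iic.preimage hg_cont)
  -- the minimum of g over K
  set m : ℝ := sInf (g '' K) with hm_def
  have hm_le : ∀ x ∈ K, m ≤ g x := fun x hx =>
    csInf_le ⟨0, by rintro b ⟨y, hy, rfl⟩; exact hg_nonneg y⟩ ⟨x, hx, rfl⟩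
  set M : Set X := {x | x ∈ K ∧ g x ≤ m} with hM_def
  have hMK : M ⊆ K := fun x hx => hx.1
  have hMconv : Convex ℝ M := hsub_convex m
  have hMcl : IsClosed M := hsub_closed m
  have hMmaps : Set.MapsTo T M M := fun x hx =>
    ⟨hmaps hx.1, le_trans (hg_shift x hx.1) hx.2⟩
  have hMne : M.Nonempty := by
    set V : ℕ → Set X := fun n => {x | x ∈ K ∧ g x ≤ m + 1 / (n + 1)} with hV_def
    have hVne : ∀ n, (V n).Nonempty := by
      intro n
      have hlt : m < m + 1 / ((n : ℝ) + 1) := by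
        have : (0 : ℝ) < 1 / ((n : ℝ) + 1) := by positivity
        linarith
      obtain ⟨b, ⟨x, hx, rfl⟩, hb⟩ := exists_lt_of_csInf_lt (hK.image g) hlt
      exact ⟨x, hx, hb.le⟩
    have hVK : ∀ n, V n ⊆ K := fun n x hx => hx.1
    have hVconv : ∀ n, Convex ℝ (V n) := fun n => hsub_convex _
    have hVcl : ∀ n, IsClosed (V n) := fun n => hsub_closed _
    have hVmono : ∀ n, V (n + 1) ⊆ V n := by
      intro n x hx
      refine ⟨hx.1, le_trans hx.2 ?_⟩
      have h1 : (1 : ℝ) / ((n : ℝ) + 1 + 1) ≤ 1 / ((n : ℝ) + 1) := by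
        apply one_div_le_one_div_of_le <;> [positivity; linarith]
      push_cast
      linarith
    have key := IsCompact.nonempty_iInter_of_sequence_nonempty_isCompact_isClosed
      (fun n => toWeakSpace ℝ X '' V n)
      (fun n => Set.image_mono (hVmono n))
      (fun n => (hVne n).image _)
      (aux_weak_compact hwc (hVK 0) (hVconv 0) (hVcl 0))
      (fun n => aux_weak_closed _ (hVconv n) (hVcl n))
    obtain ⟨z, hz⟩ := key
    have hxV : ∀ n, (toWeakSpace ℝ X).symm z ∈ V n := fun n =>
      aux_mem_image (Set.mem_iInter.mp hz n)
    refine ⟨(toWeakSpace ℝ X).symm z, (hxV 0).1, ?_⟩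
    refine aux_le_of_eps fun ε hε => ?_
    obtain ⟨n, hn⟩ := exists_nat_one_div_lt hε
    exact le_trans (hxV n).2 (by linarith)
  -- Zorn's lemma
  set Fam : Set (Set X) :=
    {A | A.Nonempty ∧ A ⊆ M ∧ Convex ℝ A ∧ IsClosed A ∧ Set.MapsTo T A A} with hFam_def
  have hMFam : M ∈ Fam := ⟨hMne, subset_rfl, hMconv, hMcl, hMmaps⟩
  have hchain : ∀ c ⊆ Fam, IsChain (· ⊆ ·) c → c.Nonempty →
      ∃ lb ∈ Fam, ∀ s ∈ c, lb ⊆ s := by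
    intro c hcF hch hcne
    haveI : Nonempty c := hcne.to_subtype
    have hAK : ∀ A : c, (A : Set X) ⊆ K := fun A => ((hcF A.2).2.1).trans hMK
    have hd : Directed (· ⊇ ·) (fun A : c => toWeakSpace ℝ X '' (A : Set X)) := by
      intro A B
      rcases hch.total A.2 B.2 with h | h
      · exact ⟨A, subset_rfl, Set.image_mono h⟩
      · exact ⟨B, Set.image_mono h, subset_rfl⟩
    have key := IsCompact.nonempty_iInter_of_directed_nonempty_isCompact_isClosed
      (fun A : c => toWeakSpace ℝ X '' (A : Set X)) hd
      (fun A => ((hcF A.2).1).image _)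
      (fun A => aux_weak_compact hwc (hAK A) (hcF A.2).2.2.1 (hcF A.2).2.2.2.1)
      (fun A => aux_weak_closed _ (hcF A.2).2.2.1 (hcF A.2).2.2.2.1)
    obtain ⟨z, hz⟩ := key
    have hxc : ∀ A ∈ c, (toWeakSpace ℝ X).symm z ∈ A := by
      intro A hA
      exact aux_mem_image (Set.mem_iInter.mp hz ⟨A, hA⟩)
    obtain ⟨A₁, hA₁⟩ := hcne
    refine ⟨⋂₀ c, ⟨⟨_, Set.mem_sInter.mpr (hxc)⟩, ?_, ?_, ?_, ?_⟩,
      fun s hs => Set.sInter_subset_of_mem hs⟩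
    · exact (Set.sInter_subset_of_mem hA₁).trans (hcF hA₁).2.1
    · exact convex_sInter fun A hA => (hcF hA).2.2.1
    · exact isClosed_sInter fun A hA => (hcF hA).2.2.2.1
    · intro x hx
      rw [Set.mem_sInter] at hx ⊢
      intro A hA
      exact (hcF hA).2.2.2.2 (hx A hA)
  obtain ⟨A₀, hA₀M, hA₀min⟩ := zorn_superset_nonempty Fam hchain M hMFam
  obtain ⟨hA₀ne, hA₀subM, hA₀conv, hA₀cl, hA₀inv⟩ := hA₀min.prop
  have hA₀K : A₀ ⊆ K := hA₀subM.trans hMK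
  -- minimal set equals closed convex hull of its image
  have hhull : closure (convexHull ℝ (T '' A₀)) = A₀ := by
    have hTA : T '' A₀ ⊆ A₀ := hA₀inv.image_subset
    have hDA : closure (convexHull ℝ (T '' A₀)) ⊆ A₀ :=
      closure_minimal (convexHull_min hTA hA₀conv) hA₀cl
    have hDFam : closure (convexHull ℝ (T '' A₀)) ∈ Fam := by
      refine ⟨(hA₀ne.image T).mono (subset_trans (subset_convexHull ℝ _) subset_closure),
        hDA.trans hA₀subM, (convex_convexHull ℝ _).closure, isClosed_closure, ?_⟩
      intro x hx
      exact subset_closure (subset_convexHull ℝ _ ⟨x, hDA hx, rfl⟩)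
    exact subset_antisymm hDA (hA₀min.2 hDFam hDA)
  -- diameter of the minimal set is zero
  have hdiam : ¬ 0 < Metric.diam A₀ := by
    intro hdpos
    obtain ⟨x, hxA, hrad⟩ := hns A₀ hA₀K hA₀ne hA₀conv hdpos
    set r : ℝ := rad A₀ x with hr_def
    have hr0 : 0 ≤ r := by
      obtain ⟨y, hy⟩ := hA₀ne
      exact le_trans dist_nonneg (le_csSup (hbdd x A₀ hA₀K) ⟨y, hy, rfl⟩)
    set Cb : Set X := {z | z ∈ A₀ ∧ ∀ y ∈ A₀, dist z y ≤ r} with hCb_def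
    have hCbeq' : Cb = A₀ ∩ ⋂ y ∈ A₀, Metric.closedBall y r := by
      ext z
      simp only [hCb_def, Set.mem_setOf_eq, Set.mem_inter_iff, Set.mem_iInter,
        Metric.mem_closedBall]
    have hxCb : x ∈ Cb := ⟨hxA, fun y hy => le_csSup (hbdd x A₀ hA₀K) ⟨y, hy, rfl⟩⟩
    have hCbFam : Cb ∈ Fam := by
      refine ⟨⟨x, hxCb⟩, fun z hz => hA₀subM hz.1, ?_, ?_, ?_⟩
      · rw [hCbeq']
        exact hA₀conv.inter (convex_iInter₂ fun y _ => convex_closedBall y r)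
      · rw [hCbeq']
        exact hA₀cl.inter (isClosed_biInter fun y _ => Metric.isClosed_closedBall)
      · intro z hz
        refine ⟨hA₀inv hz.1, fun y hy => ?_⟩
        have hball : A₀ ⊆ Metric.closedBall (T z) r := by
          rw [← hhull]
          refine closure_minimal (convexHull_min ?_ (convex_closedBall _ _))
            Metric.isClosed_closedBall
          rintro w ⟨v, hv, rfl⟩
          rw [Metric.mem_closedBall, dist_comm, hisod z (hA₀K hz.1) v (hA₀K hv)]
          exact hz.2 v hv
        have := hball hy
        rw [Metric.mem_closedBall] at this
        rwa [dist_comm]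
    have hCbA : Cb ⊆ A₀ := fun z hz => hz.1
    have hCbeq : Cb = A₀ := subset_antisymm hCbA (hA₀min.2 hCbFam hCbA)
    have hdle : Metric.diam A₀ ≤ r := by
      refine Metric.diam_le_of_forall_dist_le hr0 fun z hz y hy => ?_
      rw [← hCbeq] at hz
      exact hz.2 y hy
    linarith
  push_neg at hdiam
  obtain ⟨p, hp⟩ := hA₀ne
  have hbA : Bornology.IsBounded A₀ := by
    refine (Metric.isBounded_closedBall (x := (0 : X)) (r := R)).subset fun y hy => ?_
    rw [Metric.mem_closedBall, dist_zero_right]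
    exact hRK y (hA₀K hy)
  have hTp : T p = p := by
    have h1 : dist (T p) p ≤ Metric.diam A₀ := Metric.dist_le_diam_of_mem hbA (hA₀inv hp) hp
    have h2 : dist (T p) p ≤ 0 := le_trans h1 hdiam
    rwa [dist_le_zero] at h2
  have hpK : p ∈ K := hA₀K hp
  have hpM : p ∈ M := hA₀subM hp
  have hTiter : ∀ n, T^[n] p = p := fun n => Function.iterate_fixed hTp n
  have hdistp : ∀ n, ∀ z ∈ K, dist p (T^[n] z) = dist p z := by
    intro n z hz
    conv_lhs => rw [← hTiter n]
    exact hiterd n p hpK z hz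
  have hradK_ge : ∀ (x : X), ∀ y ∈ K, dist x y ≤ rad K x := fun x y hy =>
    le_csSup (hbdd x K subset_rfl) ⟨y, hy, rfl⟩
  have hradK_le : ∀ (x : X) (c : ℝ), (∀ y ∈ K, dist x y ≤ c) → rad K x ≤ c := by
    intro x c h
    refine csSup_le (hK.image _) ?_
    rintro b ⟨y, hy, rfl⟩
    exact h y hy
  have hap : ∀ n, a n p = rad K p := by
    intro n
    refine le_antisymm (ha_le n p _ fun y hy => ?_) (hradK_le p _ fun y hy => ?_)
    · rw [hdistp n y hy]
      exact hradK_ge p y hy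
    · rw [← hdistp n y hy]
      exact ha_ge n p _ ⟨y, hy, rfl⟩
  have hgp : g p = rad K p := by
    refine le_antisymm (le_trans (hg_le p 0) (hap 0).le) (hg_ge p _ fun n => (hap n).ge)
  have ha0 : ∀ x : X, a 0 x = rad K x := by
    intro x
    rw [ha_eq]
    simp [rad]
  have hle : rad K p ≤ chebRad K := by
    rw [← hgp]
    refine le_csInf (hK.image _) ?_
    rintro b ⟨x, hx, rfl⟩
    calc g p ≤ m := hpM.2
      _ ≤ g x := hm_le x hx
      _ ≤ a 0 x := hg_le x 0
      _ = rad K x := ha0 x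
  have hge : chebRad K ≤ rad K p := by
    refine csInf_le ⟨0, ?_⟩ ⟨p, hpK, rfl⟩
    rintro b ⟨y, hy, rfl⟩
    obtain ⟨w, hw⟩ := hK
    exact le_trans dist_nonneg (hradK_ge y w hw)
  exact ⟨p, ⟨hpK, le_antisymm hle hge⟩, hTp⟩
end

section
/- Let K be a nonempty compact convex set in a Banach space X and 𝔉 a left reversible semigroup of nonexpansive self-maps of K. Then 𝔉 has a common fixed point in K. -/
open Metric Set Finset

/-- De Marr's lemma: a compact set of positive diameter has a "nondiametral" point
in its convex hull. -/
theorem deMarr_lemma {X : Type*} [NormedAddCommGroup X] [NormedSpace ℝ X] {M : Set X}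
    (hM : IsCompact M) (hd : 0 < Metric.diam M) :
    ∃ u ∈ convexHull ℝ M, ∃ r, r < Metric.diam M ∧ ∀ y ∈ M, dist u y ≤ r := by
  classical
  set d : ℝ := Metric.diam M with hdd
  have hMb : Bornology.IsBounded M := hM.isBounded
  have hMne : M.Nonempty := by
    rcases Set.eq_empty_or_nonempty M with h | h
    · rw [h, Metric.diam_empty] at hdd; rw [hdd] at hd; exact absurd hd (lt_irrefl 0)
    · exact h
  -- equilateral finsets
  set E : Finset X → Prop := fun T => ↑T ⊆ M ∧ ∀ x ∈ T, ∀ y ∈ T, x ≠ y → dist x y = d with hE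
  -- a uniform bound on cardinality of equilateral finsets
  obtain ⟨t, htf, htcov⟩ : ∃ t : Set X, t.Finite ∧ M ⊆ ⋃ y ∈ t, ball y (d/3) :=
    Metric.totallyBounded_iff.mp hM.totallyBounded (d/3) (by linarith)
  have hbound : ∀ T, E T → T.card ≤ htf.toFinset.card := by
    intro T ⟨hTM, hTd⟩
    have : ∀ x ∈ T, ∃ c ∈ htf.toFinset, x ∈ ball c (d/3) := by
      intro x hx
      have := htcov (hTM hx)
      simp only [Set.mem_iUnion] at this
      obtain ⟨c, hc, hxc⟩ := this
      exact ⟨c, htf.mem_toFinset.mpr hc, hxc⟩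
    choose φ hφ hφb using this
    refine Finset.card_le_card_of_injOn (fun x => if h : x ∈ T then φ x h else x)
      (fun x hx => by rw [Finset.mem_coe] at hx; simpa [hx] using hφ x hx) ?_
    intro x hx y hy hxy
    simp only [Finset.mem_coe] at hx hy
    simp only [dif_pos hx, dif_pos hy] at hxy
    by_contra hne
    have h1 := hφb x hx
    have h2 := hφb y hy
    rw [hxy] at h1
    have : dist x y < d := by
      have := dist_triangle x (φ y hy) y
      rw [Metric.mem_ball] at h1 h2
      rw [dist_comm (φ y hy) y] at *
      calc dist x y ≤ dist x (φ y hy) + dist (φ y hy) y := dist_triangle _ _ _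
        _ < d/3 + d/3 := by
            rw [dist_comm (φ y hy) y]; exact add_lt_add h1 h2
        _ < d := by linarith
    rw [hTd x hx y hy hne] at this
    exact absurd this (lt_irrefl d)
  -- diameter attained: a 2-element equilateral finset
  obtain ⟨⟨a,b⟩, hpm, hab⟩ : ∃ p : X × X, p ∈ M ×ˢ M ∧ ∀ q ∈ M ×ˢ M, dist q.1 q.2 ≤ dist p.1 p.2 := by
    obtain ⟨p, hp, hmax⟩ := (hM.prod hM).exists_isMaxOn (hMne.prod hMne)
      (continuous_dist.continuousOn)
    exact ⟨p, hp, fun q hq => hmax hq⟩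
  rw [Set.mem_prod] at hpm
  obtain ⟨haM, hbM⟩ := hpm
  have habd : dist a b = d := by
    apply le_antisymm (Metric.dist_le_diam_of_mem hMb haM hbM)
    apply Metric.diam_le_of_forall_dist_le (dist_nonneg)
    intro x hx y hy
    exact hab (x, y) (Set.mk_mem_prod hx hy)
  have hne2 : a ≠ b := by
    intro h; rw [h, dist_self] at habd; rw [← habd] at hd; exact absurd hd (lt_irrefl 0)
  set P : ℕ → Prop := fun n => ∃ T : Finset X, E T ∧ T.card = n with hPdef
  set N := htf.toFinset.card with hN
  have hP2 : P 2 := by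
    refine ⟨{a, b}, ⟨?_, ?_⟩, ?_⟩
    · intro z hz
      simp only [Finset.coe_insert, Finset.coe_singleton, Set.mem_insert_iff,
        Set.mem_singleton_iff] at hz
      rcases hz with rfl | rfl
      · exact haM
      · exact hbM
    · intro x hx y hy hxy
      simp only [Finset.mem_insert, Finset.mem_singleton] at hx hy
      rcases hx with rfl | rfl <;> rcases hy with rfl | rfl
      · exact absurd rfl hxy
      · exact habd
      · rw [dist_comm]; exact habd
      · exact absurd rfl hxy
    · rw [Finset.card_insert_of_notMem (by simpa using hne2), Finset.card_singleton]
  have hPbd : ∀ m, P m → m ≤ N := by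
    rintro m ⟨T, hT, rfl⟩; exact hbound T hT
  set n := Nat.findGreatest P N with hn
  have hPn : P n := Nat.findGreatest_spec (hPbd 2 hP2) hP2
  have h2n : 2 ≤ n := Nat.le_findGreatest (hPbd 2 hP2) hP2
  obtain ⟨T, ⟨hTM, hTd⟩, hTcard⟩ := hPn
  have hn0 : (0:ℝ) < (n:ℝ) := by exact_mod_cast Nat.lt_of_lt_of_le (by norm_num) h2n
  set u : X := ∑ x ∈ T, ((n:ℝ)⁻¹) • x with hu_def
  have hu : u ∈ convexHull ℝ M := by
    apply Convex.sum_mem (convex_convexHull ℝ M)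
    · intro i _hi; positivity
    · rw [Finset.sum_const, hTcard, nsmul_eq_mul, mul_inv_cancel₀ (ne_of_gt hn0)]
    · intro i hi; exact subset_convexHull ℝ M (hTM hi)
  have hest : ∀ y : X, dist u y ≤ (n:ℝ)⁻¹ * ∑ x ∈ T, dist x y := by
    intro y
    have hsub : u - y = ∑ x ∈ T, ((n:ℝ)⁻¹) • (x - y) := by
      simp only [smul_sub, Finset.sum_sub_distrib, Finset.sum_const, hTcard]
      congr 1
      rw [← Nat.cast_smul_eq_nsmul ℝ, smul_smul, mul_inv_cancel₀ (ne_of_gt hn0), one_smul]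
    rw [dist_eq_norm, hsub]
    calc ‖∑ x ∈ T, ((n:ℝ)⁻¹) • (x - y)‖ ≤ ∑ x ∈ T, ‖((n:ℝ)⁻¹) • (x - y)‖ :=
          norm_sum_le _ _
      _ = ∑ x ∈ T, (n:ℝ)⁻¹ * ‖x - y‖ := by
          apply Finset.sum_congr rfl; intro x _
          rw [norm_smul, Real.norm_eq_abs, abs_of_nonneg (by positivity)]
      _ = (n:ℝ)⁻¹ * ∑ x ∈ T, dist x y := by
          rw [Finset.mul_sum]
          exact Finset.sum_congr rfl fun x _ => by rw [dist_eq_norm]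
  have hled : ∀ y ∈ M, dist u y ≤ d := by
    intro y hy
    refine (hest y).trans ?_
    have : ∑ x ∈ T, dist x y ≤ ∑ x ∈ T, d :=
      Finset.sum_le_sum fun x hx => Metric.dist_le_diam_of_mem hMb (hTM hx) hy
    calc (n:ℝ)⁻¹ * ∑ x ∈ T, dist x y ≤ (n:ℝ)⁻¹ * (n * d) := by
          apply mul_le_mul_of_nonneg_left _ (by positivity)
          simpa [hTcard, mul_comm] using this
      _ = d := by field_simp
  obtain ⟨y₀, hy₀M, hy₀max⟩ := hM.exists_isMaxOn hMne
    ((continuous_const.dist continuous_id).continuousOn)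
  refine ⟨u, hu, dist u y₀, ?_, fun y hy => hy₀max hy⟩
  by_contra hge
  push_neg at hge
  have hequ : dist u y₀ = d := le_antisymm (hled y₀ hy₀M) hge
  have hall : ∀ x ∈ T, dist x y₀ = d := by
    by_contra hsome
    push_neg at hsome
    obtain ⟨x, hx, hxd⟩ := hsome
    have hlt : dist x y₀ < d :=
      lt_of_le_of_ne (Metric.dist_le_diam_of_mem hMb (hTM hx) hy₀M) hxd
    have hsum : ∑ z ∈ T, dist z y₀ < ∑ z ∈ T, d :=
      Finset.sum_lt_sum (fun z hz => Metric.dist_le_diam_of_mem hMb (hTM hz) hy₀M) ⟨x, hx, hlt⟩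
    have : dist u y₀ < d := by
      calc dist u y₀ ≤ (n:ℝ)⁻¹ * ∑ z ∈ T, dist z y₀ := hest y₀
        _ < (n:ℝ)⁻¹ * (n * d) := by
            apply mul_lt_mul_of_pos_left _ (by positivity)
            simpa [hTcard, mul_comm] using hsum
        _ = d := by field_simp
    rw [hequ] at this; exact absurd this (lt_irrefl d)
  have hy₀T : y₀ ∉ T := by
    intro hmem
    have hzero : dist y₀ y₀ = d := hall y₀ hmem
    rw [dist_self] at hzero
    rw [← hzero] at hd
    exact absurd hd (lt_irrefl 0)
  have hPn1 : P (n + 1) := by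
    refine ⟨insert y₀ T, ⟨?_, ?_⟩, ?_⟩
    · intro z hz
      simp only [Finset.coe_insert, Set.mem_insert_iff, Finset.mem_coe] at hz
      rcases hz with rfl | hz
      · exact hy₀M
      · exact hTM hz
    · intro x hx y hy hxy
      simp only [Finset.mem_insert] at hx hy
      rcases hx with rfl | hx <;> rcases hy with rfl | hy
      · exact absurd rfl hxy
      · rw [dist_comm]; exact hall y hy
      · exact hall x hx
      · exact hTd x hx y hy hxy
    · rw [Finset.card_insert_of_notMem hy₀T, hTcard]
  exact Nat.findGreatest_is_greatest (Nat.lt_succ_self n) (hPbd (n+1) hPn1) hPn1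

theorem leftReversible_nonexpansive_common_fixedPoint
    {X : Type*} [NormedAddCommGroup X] [NormedSpace ℝ X] [CompleteSpace X]
    (K : Set X) (hK : K.Nonempty) (hc : IsCompact K) (hconv : Convex ℝ K)
    (𝔉 : Set (K → K)) (h𝔉 : 𝔉.Nonempty)
    (hcomp : ∀ f ∈ 𝔉, ∀ g ∈ 𝔉, f ∘ g ∈ 𝔉)
    (hne : ∀ f ∈ 𝔉, ∀ x y : K, dist (f x) (f y) ≤ dist x y)
    (hLR : ∀ f ∈ 𝔉, ∀ g ∈ 𝔉, ∃ u ∈ 𝔉, ∃ v ∈ 𝔉, f ∘ u = g ∘ v) :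
    ∃ x : K, ∀ f ∈ 𝔉, f x = x := by
  classical
  haveI hKcs : CompactSpace ↥K := isCompact_iff_compactSpace.mp hc
  haveI : Nonempty ↥𝔉 := h𝔉.to_subtype
  have hcont : ∀ f ∈ 𝔉, Continuous f := by
    intro f hf
    refine LipschitzWith.continuous (K := 1) (LipschitzWith.of_dist_le_mul ?_)
    intro p q; simpa using hne f hf p q
  -- Zorn: minimal invariant nonempty compact convex subset of K
  set S : Set (Set X) := {W | W ⊆ K ∧ W.Nonempty ∧ IsCompact W ∧ Convex ℝ W ∧
    ∀ f ∈ 𝔉, ∀ p : ↥K, ↑p ∈ W → ↑(f p) ∈ W} with hS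
  have hKS : K ∈ S := ⟨Set.Subset.rfl, hK, hc, hconv, fun f hf p _ => (f p).2⟩
  have hchainlb : ∀ c ⊆ S, IsChain (· ⊆ ·) c → c.Nonempty → ∃ lb ∈ S, ∀ s ∈ c, lb ⊆ s := by
    intro c hcS hchain hcne
    haveI : Nonempty ↥c := hcne.to_subtype
    refine ⟨⋂₀ c, ⟨?_, ?_, ?_, ?_, ?_⟩, fun s hs => Set.sInter_subset_of_mem hs⟩
    · obtain ⟨W₀, hW₀⟩ := hcne
      exact (Set.sInter_subset_of_mem hW₀).trans (hcS hW₀).1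
    · refine IsCompact.nonempty_sInter_of_directed_nonempty_isCompact_isClosed ?_
        (fun U hU => (hcS hU).2.1) (fun U hU => (hcS hU).2.2.1)
        (fun U hU => (hcS hU).2.2.1.isClosed)
      intro A hA B hB
      rcases hchain.total hA hB with h | h
      · exact ⟨A, hA, le_refl _, h⟩
      · exact ⟨B, hB, h, le_refl _⟩
    · obtain ⟨W₀, hW₀⟩ := hcne
      exact (hcS hW₀).2.2.1.of_isClosed_subset
        (isClosed_sInter fun U hU => (hcS hU).2.2.1.isClosed)
        (Set.sInter_subset_of_mem hW₀)
    · exact convex_sInter fun U hU => (hcS hU).2.2.2.1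
    · intro f hf p hp
      rw [Set.mem_sInter] at hp ⊢
      exact fun U hU => (hcS hU).2.2.2.2 f hf p (hp U hU)
  obtain ⟨W, hWK, hWmin'⟩ := zorn_superset_nonempty S hchainlb K hKS
  have hWmin : ∀ a ∈ S, a ⊆ W → a = W :=
    fun a ha hsub => le_antisymm hsub (hWmin'.le_of_le ha hsub)
  obtain ⟨hWK', hWne, hWcpt, hWconv, hWinv⟩ := hWmin'.prop
  obtain ⟨x₀, hx₀⟩ := hWne
  set x : ↥K := ⟨x₀, hWK hx₀⟩ with hx
  -- orbits and the limit set L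
  set Orb : (↥K → ↥K) → Set ↥K :=
    fun f => insert (f x) ((fun g : ↥K → ↥K => f (g x)) '' 𝔉) with hOrb
  have hOsub : ∀ f ∈ 𝔉, ∀ u ∈ 𝔉, Orb (f ∘ u) ⊆ Orb f := by
    intro f hf u hu z hz
    rcases hz with rfl | ⟨g, hg, rfl⟩
    · exact Set.mem_insert_of_mem _ ⟨u, hu, rfl⟩
    · exact Set.mem_insert_of_mem _ ⟨u ∘ g, hcomp u hu g hg, rfl⟩
  have hOimg : ∀ t f : ↥K → ↥K, t '' Orb f = Orb (t ∘ f) := by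
    intro t f
    rw [hOrb]
    simp only [Set.image_insert_eq, Set.image_image, Function.comp_apply]
  have hOne : ∀ f : ↥K → ↥K, (Orb f).Nonempty := fun f => ⟨f x, Set.mem_insert _ _⟩
  set L : Set ↥K := ⋂ s : ↥𝔉, closure (Orb s.1) with hL
  have hLclosed : IsClosed L := isClosed_iInter fun s => isClosed_closure
  have hLcpt : IsCompact L := hLclosed.isCompact
  -- directedness of the orbit closures
  have hdir : ∀ s ∈ 𝔉, ∀ t ∈ 𝔉, ∃ r ∈ 𝔉, Orb r ⊆ Orb s ∧ Orb r ⊆ Orb t := by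
    intro s hs t ht
    obtain ⟨u, hu, v, hv, huv⟩ := hLR s hs t ht
    exact ⟨s ∘ u, hcomp s hs u hu, hOsub s hs u hu, huv ▸ hOsub t ht v hv⟩
  have hLne : L.Nonempty := by
    refine IsCompact.nonempty_iInter_of_directed_nonempty_isCompact_isClosed _ ?_
      (fun s => (hOne s.1).closure) (fun s => isClosed_closure.isCompact)
      (fun s => isClosed_closure)
    intro s t
    obtain ⟨r, hr, hrs, hrt⟩ := hdir s.1 s.2 t.1 t.2
    exact ⟨⟨r, hr⟩, closure_mono hrs, closure_mono hrt⟩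
  -- L is in W
  have hLW : ∀ y ∈ L, ↑y ∈ W := by
    have hOW : ∀ s ∈ 𝔉, Orb s ⊆ Subtype.val ⁻¹' W := by
      intro s hs z hz
      rcases hz with rfl | ⟨g, hg, rfl⟩
      · exact hWinv s hs x hx₀
      · exact hWinv s hs (g x) (hWinv g hg x hx₀)
    intro y hy
    have hclosedpre : IsClosed (Subtype.val ⁻¹' W : Set ↥K) :=
      hWcpt.isClosed.preimage continuous_subtype_val
    have : y ∈ closure (Orb (Classical.choose h𝔉)) := by
      rw [hL] at hy
      exact Set.mem_iInter.mp hy ⟨Classical.choose h𝔉, Classical.choose_spec h𝔉⟩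
    exact (closure_minimal (hOW _ (Classical.choose_spec h𝔉)) hclosedpre) this
  -- forward invariance : t '' L ⊆ L
  have hLinv : ∀ t ∈ 𝔉, ∀ y ∈ L, t y ∈ L := by
    intro t ht y hy
    rw [hL, Set.mem_iInter]
    rintro ⟨s, hs⟩
    obtain ⟨u, hu, v, hv, huv⟩ := hLR s hs t ht
    have hyv : y ∈ closure (Orb v) := Set.mem_iInter.mp hy ⟨v, hv⟩
    have : t y ∈ closure (t '' Orb v) :=
      (image_closure_subset_closure_image (hcont t ht)) ⟨y, hyv, rfl⟩
    rw [hOimg, ← huv] at this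
    exact closure_mono (hOsub s hs u hu) this
  -- backward density : L ⊆ closure (t '' L)
  have hLdense : ∀ t ∈ 𝔉, ∀ y ∈ L, ∀ ε > (0:ℝ), ∃ z ∈ L, dist (t z) y ≤ ε := by
    intro t ht y hy ε hε
    set C : ↥𝔉 → Set ↥K :=
      fun s => closure (Orb s.1) ∩ {w | dist (t w) y ≤ ε} with hC
    have hCclosed : ∀ s, IsClosed (C s) := by
      intro s
      exact isClosed_closure.inter (isClosed_le (Continuous.dist (hcont t ht) continuous_const) continuous_const)
    have hCne : ∀ s, (C s).Nonempty := by
      rintro ⟨s, hs⟩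
      have hyts : y ∈ closure (t '' Orb s) := by
        rw [hOimg]
        exact Set.mem_iInter.mp hy ⟨t ∘ s, hcomp t ht s hs⟩
      rw [Metric.mem_closure_iff] at hyts
      obtain ⟨b, ⟨w, hw, rfl⟩, hb⟩ := hyts ε hε
      exact ⟨w, subset_closure hw, by rw [Set.mem_setOf_eq, dist_comm]; exact le_of_lt hb⟩
    have hCdir : Directed (· ⊇ ·) C := by
      rintro ⟨s, hs⟩ ⟨s', hs'⟩
      obtain ⟨r, hr, hrs, hrs'⟩ := hdir s hs s' hs'
      exact ⟨⟨r, hr⟩, Set.inter_subset_inter_left _ (closure_mono hrs),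
        Set.inter_subset_inter_left _ (closure_mono hrs')⟩
    obtain ⟨z, hz⟩ := IsCompact.nonempty_iInter_of_directed_nonempty_isCompact_isClosed C
      hCdir hCne (fun s => (hCclosed s).isCompact) hCclosed
    rw [Set.mem_iInter] at hz
    refine ⟨z, ?_, (hz (Classical.arbitrary _)).2⟩
    rw [hL, Set.mem_iInter]
    exact fun s => (hz s).1
  -- the image of L in X
  set Lv : Set X := Subtype.val '' L with hLv
  have hLvcpt : IsCompact Lv := hLcpt.image continuous_subtype_val
  have hLvW : Lv ⊆ W := by rintro _ ⟨y, hy, rfl⟩; exact hLW y hy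
  rcases eq_or_lt_of_le (Metric.diam_nonneg (s := Lv)) with hdiam | hdiam
  · -- L is a single point, which is the common fixed point
    obtain ⟨p, hp⟩ := hLne
    refine ⟨p, fun f hf => ?_⟩
    have h1 : ↑(f p) ∈ Lv := ⟨f p, hLinv f hf p hp, rfl⟩
    have h2 : ↑p ∈ Lv := ⟨p, hp, rfl⟩
    have := Metric.dist_le_diam_of_mem hLvcpt.isBounded h1 h2
    rw [← hdiam] at this
    have : dist (↑(f p) : X) ↑p = 0 := le_antisymm this dist_nonneg
    exact Subtype.ext (by rwa [dist_eq_zero] at this)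
  · -- De Marr's lemma contradicts minimality
    exfalso
    obtain ⟨u, hu, r, hrd, hur⟩ := deMarr_lemma hLvcpt hdiam
    have huW : u ∈ W := convexHull_min hLvW hWconv hu
    set W₁ : Set X := W ∩ ⋂ y ∈ L, Metric.closedBall (↑y) r with hW₁
    have hW₁W : W₁ ⊆ W := Set.inter_subset_left
    have hrpos : (0:ℝ) ≤ r := by
      obtain ⟨p, hp⟩ := hLne
      exact dist_nonneg.trans (hur _ ⟨p, hp, rfl⟩)
    have hW₁S : W₁ ∈ S := by
      refine ⟨hW₁W.trans hWK, ⟨u, huW, ?_⟩, ?_, ?_, ?_⟩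
      · rw [Set.mem_iInter₂]
        intro y hy
        exact Metric.mem_closedBall.mpr (hur _ ⟨y, hy, rfl⟩)
      · exact hWcpt.of_isClosed_subset
          (hWcpt.isClosed.inter (isClosed_biInter fun y _ => Metric.isClosed_closedBall))
          Set.inter_subset_left
      · exact hWconv.inter (convex_iInter₂ fun y _ => convex_closedBall _ _)
      · intro f hf p hp
        obtain ⟨hpW, hpball⟩ := hp
        rw [Set.mem_iInter₂] at hpball
        refine ⟨hWinv f hf p hpW, ?_⟩
        rw [Set.mem_iInter₂]
        intro y hy
        rw [Metric.mem_closedBall, dist_comm]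
        refine le_of_forall_pos_le_add ?_
        intro ε hε
        obtain ⟨z, hz, htz⟩ := hLdense f hf y hy ε hε
        have htz' : dist (↑(f z) : X) ↑y ≤ ε := by rwa [Subtype.dist_eq] at htz
        have hnez : dist (↑(f z) : X) ↑(f p) ≤ dist (↑z : X) ↑p := by
          have h := hne f hf z p
          rwa [Subtype.dist_eq, Subtype.dist_eq] at h
        have hzp : dist (↑z : X) ↑p ≤ r := by
          have h := hpball z hz
          rw [Metric.mem_closedBall] at h
          rwa [dist_comm]
        calc dist (↑y : X) ↑(f p) ≤ dist (↑y : X) ↑(f z) + dist (↑(f z) : X) ↑(f p) :=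
              dist_triangle _ _ _
          _ ≤ ε + r := by
              rw [dist_comm (↑y : X)]
              exact add_le_add htz' (hnez.trans hzp)
          _ = r + ε := add_comm _ _
    have hW₁eq : W₁ = W := hWmin W₁ hW₁S hW₁W
    -- but W₁ has small diameter while L ⊆ W has diameter > r
    have : ∃ y ∈ Lv, ∃ y' ∈ Lv, r < dist y y' := by
      by_contra hcon
      push_neg at hcon
      have : Metric.diam Lv ≤ r := Metric.diam_le_of_forall_dist_le hrpos
        fun p hp q hq => hcon p hp q hq
      exact absurd (lt_of_le_of_lt this hrd) (lt_irrefl _)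
    obtain ⟨y, hy, y', hy', hyy'⟩ := this
    have hyW₁ : y ∈ W₁ := hW₁eq ▸ hLvW hy
    obtain ⟨z', hz', rfl⟩ := hy'
    have := (Set.mem_iInter₂.mp hyW₁.2) z' hz'
    rw [Metric.mem_closedBall] at this
    exact absurd hyy' (not_lt.mpr this)
end
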